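/- arXiv:2405.04409 — 4 statements merged into one kernel-verified Lean document; each statement's English description precedes it below -/
import Mathlib

section
/- Let L be an m×n real matrix with columns L_1,…,L_n, Γ an n×n diagonal matrix with strictly positive diagonal entries Γ_kk, C a symmetric positive definite m×m real matrix, and Σ = LΓLᵀ + C. Let y ∈ ℝᵐ be nonzero and suppose the k-th column satisfies L_k = s_k·y for some nonzero real s_k. Then the standardized value z_k = Γ_kk L_kᵀΣ⁻¹y / √(Γ_kk L_kᵀΣ⁻¹L_k) satisfies |z_k| = √(Γ_kk · yᵀΣ⁻¹y); in particular |z_k| does not depend on the magnitude |s_k| of the corresponding system matrix column. -/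
open Matrix

/-- Let `L` be an `m × n` real matrix with columns `L_1, …, L_n`,
`Γ = diagonal γ` an `n × n` diagonal matrix with strictly positive diagonal entries,
`C` a symmetric positive definite `m × m` real matrix, and `S = L Γ Lᵀ + C`. Let
`y ∈ ℝᵐ` be nonzero and suppose the `k`-th column satisfies `L_k = s • y` for some
nonzero real `s`. Then the standardized value
`z_k = γ_k L_kᵀ S⁻¹ y / √(γ_k L_kᵀ S⁻¹ L_k)` satisfies `|z_k| = √(γ_k · yᵀ S⁻¹ y)`;
in particular `|z_k|` does not depend on the magnitude `|s|`. -/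
theorem standardized_value_of_parallel_column {m n : ℕ}
    (L : Matrix (Fin m) (Fin n) ℝ) (γ : Fin n → ℝ) (hγ : ∀ i, 0 < γ i)
    (C : Matrix (Fin m) (Fin m) ℝ) (hC : C.PosDef)
    (S : Matrix (Fin m) (Fin m) ℝ) (hS : S = L * Matrix.diagonal γ * Lᵀ + C)
    (y : Fin m → ℝ) (hy : y ≠ 0) (k : Fin n) (s : ℝ) (hs : s ≠ 0)
    (hLk : (fun i => L i k) = s • y) :
    |γ k * ((fun i => L i k) ⬝ᵥ (S⁻¹ *ᵥ y)) /
        Real.sqrt (γ k * ((fun i => L i k) ⬝ᵥ (S⁻¹ *ᵥ fun i => L i k)))| =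
      Real.sqrt (γ k * (y ⬝ᵥ (S⁻¹ *ᵥ y))) := by
  have hSpd : S.PosDef := by
    rw [hS]
    refine Matrix.PosDef.posSemidef_add ?_ hC
    have hγpsd : (Matrix.diagonal γ).PosSemidef :=
      Matrix.posSemidef_diagonal_iff.mpr fun i => (hγ i).le
    simpa [Matrix.mul_assoc] using hγpsd.mul_mul_conjTranspose_same L
  have hSinv : (S⁻¹).PosDef := hSpd.inv
  have hq : 0 < y ⬝ᵥ (S⁻¹ *ᵥ y) := by
    have := hSinv.dotProduct_mulVec_pos hy
    simpa using this
  set q := y ⬝ᵥ (S⁻¹ *ᵥ y) with hqdef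
  have ha : 0 < γ k * q := mul_pos (hγ k) hq
  rw [hLk]
  simp only [smul_dotProduct, Matrix.mulVec_smul, dotProduct_smul, smul_eq_mul, ← hqdef]
  rw [show γ k * (s * (s * q)) = s ^ 2 * (γ k * q) by ring,
    Real.sqrt_mul (sq_nonneg s), Real.sqrt_sq_eq_abs,
    show γ k * (s * q) = s * (γ k * q) by ring,
    abs_div, abs_mul s, abs_mul |s|, abs_abs, abs_of_pos ha,
    abs_of_nonneg (Real.sqrt_nonneg _),
    mul_div_mul_left _ _ (abs_ne_zero.mpr hs)]
  exact Real.div_sqrt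
end

section
/- Let L be an m×n real matrix with nonzero columns L_1,…,L_n, let δ > 0, let C be a symmetric positive definite m×m real matrix, and set Σ = δLLᵀ + C. Let y ∈ ℝᵐ be nonzero and let S(y) = {k : L_k is a nonzero scalar multiple of y} be nonempty. For the standardized values z_j = √δ · L_jᵀΣ⁻¹y / √(L_jᵀΣ⁻¹L_j), one has |z_j| ≤ √(δ · yᵀΣ⁻¹y) for every j, with equality exactly for j ∈ S(y); hence the set of indices of maximal |z_j| equals S(y). -/
open Matrix

/-- Cauchy–Schwarz with equality case, stated purely in terms of `inner`. -/
theorem aux_cauchy_schwarz {E : Type*} [NormedAddCommGroup E] [InnerProductSpace ℝ E]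
    (u v : E) (hu : u ≠ 0) (hv : v ≠ 0) :
    |(inner ℝ u v : ℝ)| ≤ Real.sqrt (inner ℝ u u : ℝ) * Real.sqrt (inner ℝ v v : ℝ) ∧
      (|(inner ℝ u v : ℝ)| = Real.sqrt (inner ℝ u u : ℝ) * Real.sqrt (inner ℝ v v : ℝ) ↔
        ∃ c : ℝ, c ≠ 0 ∧ u = c • v) := by
  have h1 : Real.sqrt (inner ℝ u u : ℝ) = ‖u‖ := by
    rw [real_inner_self_eq_norm_mul_norm, Real.sqrt_mul_self (norm_nonneg u)]
  have h2 : Real.sqrt (inner ℝ v v : ℝ) = ‖v‖ := by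
    rw [real_inner_self_eq_norm_mul_norm, Real.sqrt_mul_self (norm_nonneg v)]
  rw [h1, h2]
  refine ⟨abs_real_inner_le_norm u v, ?_⟩
  rw [← Real.norm_eq_abs, norm_inner_eq_norm_iff hu hv] at *
  constructor
  · rintro ⟨r, hr, hrv⟩
    exact ⟨r⁻¹, inv_ne_zero hr, by rw [hrv, smul_smul, inv_mul_cancel₀ hr, one_smul]⟩
  · rintro ⟨c, hc, hcv⟩
    exact ⟨c⁻¹, inv_ne_zero hc, by rw [hcv, smul_smul, inv_mul_cancel₀ hc, one_smul]⟩

/-- Let `L` be an `m × n` real matrix with nonzero columns, `δ > 0`,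
`C` a symmetric positive definite `m × m` real matrix, and `S = δ L Lᵀ + C`. Let
`y ∈ ℝᵐ` be nonzero and let `Spar = {k : L_k is a nonzero scalar multiple of y}` be
nonempty. For the standardized values
`z_j = √δ · L_jᵀ S⁻¹ y / √(L_jᵀ S⁻¹ L_j)`, one has `|z_j| ≤ √(δ · yᵀ S⁻¹ y)` for every
`j`, with equality exactly for `j ∈ Spar`; hence the set of indices of maximal `|z_j|`
equals `Spar`. -/
theorem standardized_maximizers_eq_parallel_set {m n : ℕ}
    (L : Matrix (Fin m) (Fin n) ℝ) (hcol : ∀ j : Fin n, (fun i => L i j) ≠ 0)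
    (δ : ℝ) (hδ : 0 < δ)
    (C : Matrix (Fin m) (Fin m) ℝ) (hC : C.PosDef)
    (S : Matrix (Fin m) (Fin m) ℝ) (hS : S = δ • (L * Lᵀ) + C)
    (y : Fin m → ℝ) (hy : y ≠ 0)
    (Spar : Set (Fin n))
    (hSpar : Spar = {k : Fin n | ∃ c : ℝ, c ≠ 0 ∧ (fun i => L i k) = c • y})
    (hne : Spar.Nonempty)
    (z : Fin n → ℝ)
    (hz : ∀ j, z j = Real.sqrt δ * ((fun i => L i j) ⬝ᵥ (S⁻¹ *ᵥ y)) /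
        Real.sqrt ((fun i => L i j) ⬝ᵥ (S⁻¹ *ᵥ fun i => L i j))) :
    (∀ j, |z j| ≤ Real.sqrt (δ * (y ⬝ᵥ (S⁻¹ *ᵥ y)))) ∧
      (∀ j, |z j| = Real.sqrt (δ * (y ⬝ᵥ (S⁻¹ *ᵥ y))) ↔ j ∈ Spar) ∧
      {j : Fin n | ∀ i, |z i| ≤ |z j|} = Spar := by
  -- S is positive definite
  have hLLT : (δ • (L * Lᵀ)).PosSemidef := by
    have h0 : (L * Lᵀ).PosSemidef := by
      have := Matrix.posSemidef_self_mul_conjTranspose L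
      simpa using this
    refine Matrix.PosSemidef.of_dotProduct_mulVec_nonneg ?_ (fun x => ?_)
    · show _ = _
      rw [conjTranspose_smul, h0.1.eq]
      simp
    · rw [Matrix.smul_mulVec, dotProduct_smul]
      have := h0.dotProduct_mulVec_nonneg x
      positivity
  have hSpd : S.PosDef := by
    rw [hS]
    exact Matrix.PosDef.posSemidef_add hLLT hC
  have hSi : S⁻¹.PosDef := hSpd.inv
  letI instN := S⁻¹.toNormedAddCommGroup hSi
  letI instI := S⁻¹.toInnerProductSpace hSi.posSemidef
  have hinner : ∀ u v : Fin m → ℝ,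
      (inner ℝ u v : ℝ) = u ⬝ᵥ (S⁻¹ *ᵥ v) := by
    intro u v; change (S⁻¹ *ᵥ v) ⬝ᵥ star u = _; rw [dotProduct_comm, star_trivial]
  have key := fun (u : Fin m → ℝ) (hu : u ≠ 0) =>
    aux_cauchy_schwarz (E := Fin m → ℝ) u y hu hy
  simp only [hinner] at key
  set u : Fin n → (Fin m → ℝ) := fun j => fun i => L i j with hu
  have hδs : (0 : ℝ) < Real.sqrt δ := Real.sqrt_pos.mpr hδ
  have hq : ∀ v : Fin m → ℝ, v ≠ 0 → 0 < v ⬝ᵥ (S⁻¹ *ᵥ v) := by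
    intro v hv
    have := hSi.dotProduct_mulVec_pos hv
    simpa using this
  have hsq : ∀ j, 0 < Real.sqrt (u j ⬝ᵥ (S⁻¹ *ᵥ u j)) :=
    fun j => Real.sqrt_pos.mpr (hq _ (hcol j))
  have hysq : 0 < Real.sqrt (y ⬝ᵥ (S⁻¹ *ᵥ y)) := Real.sqrt_pos.mpr (hq _ hy)
  have habs : ∀ j, |z j| = Real.sqrt δ * |u j ⬝ᵥ (S⁻¹ *ᵥ y)| /
      Real.sqrt (u j ⬝ᵥ (S⁻¹ *ᵥ u j)) := by
    intro j
    rw [hz j, abs_div, abs_mul, abs_of_nonneg hδs.le,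
      abs_of_nonneg (Real.sqrt_nonneg _)]
  have hbound : Real.sqrt (δ * (y ⬝ᵥ (S⁻¹ *ᵥ y)))
      = Real.sqrt δ * Real.sqrt (y ⬝ᵥ (S⁻¹ *ᵥ y)) := Real.sqrt_mul hδ.le _
  have hle : ∀ j, |z j| ≤ Real.sqrt δ * Real.sqrt (y ⬝ᵥ (S⁻¹ *ᵥ y)) := by
    intro j
    rw [habs j, div_le_iff₀ (hsq j)]
    have h := (key (u j) (hcol j)).1
    calc Real.sqrt δ * |u j ⬝ᵥ (S⁻¹ *ᵥ y)|
        ≤ Real.sqrt δ * (Real.sqrt (u j ⬝ᵥ (S⁻¹ *ᵥ u j)) * Real.sqrt (y ⬝ᵥ (S⁻¹ *ᵥ y))) :=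
          mul_le_mul_of_nonneg_left h hδs.le
      _ = Real.sqrt δ * Real.sqrt (y ⬝ᵥ (S⁻¹ *ᵥ y)) * Real.sqrt (u j ⬝ᵥ (S⁻¹ *ᵥ u j)) := by
          ring
  have heq : ∀ j, |z j| = Real.sqrt δ * Real.sqrt (y ⬝ᵥ (S⁻¹ *ᵥ y)) ↔ j ∈ Spar := by
    intro j
    rw [habs j, div_eq_iff (hsq j).ne', hSpar]
    have hiff := (key (u j) (hcol j)).2
    constructor
    · intro h
      have h2 : |u j ⬝ᵥ (S⁻¹ *ᵥ y)|
          = Real.sqrt (u j ⬝ᵥ (S⁻¹ *ᵥ u j)) * Real.sqrt (y ⬝ᵥ (S⁻¹ *ᵥ y)) := by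
        have : Real.sqrt δ * |u j ⬝ᵥ (S⁻¹ *ᵥ y)|
            = Real.sqrt δ * (Real.sqrt (u j ⬝ᵥ (S⁻¹ *ᵥ u j)) * Real.sqrt (y ⬝ᵥ (S⁻¹ *ᵥ y))) := by
          rw [h]; ring
        exact mul_left_cancel₀ hδs.ne' this
      exact hiff.mp h2
    · intro hj
      rw [hiff.mpr hj]; ring
  refine ⟨fun j => by rw [hbound]; exact hle j,
    fun j => by rw [hbound]; exact heq j, ?_⟩
  ext j
  simp only [Set.mem_setOf_eq]
  constructor
  · intro hmax
    obtain ⟨k, hk⟩ := hne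
    have hk' : |z k| = Real.sqrt δ * Real.sqrt (y ⬝ᵥ (S⁻¹ *ᵥ y)) := (heq k).mpr hk
    exact (heq j).mp (le_antisymm (hle j) (hk' ▸ hmax k))
  · intro hj i
    rw [(heq j).mpr hj]
    exact hle i
end

section
/- Let C be a symmetric positive definite m×m real matrix, L_1 ∈ ℝᵐ nonzero, a, b ∈ ℝ, and w ∈ ℝᵐ with L_1ᵀC⁻¹w = 0. Let L be the m×3 matrix with columns L_1, a·L_1, and L_3 = b·L_1 + w, let Γ = diag(p_1, p_2, q) with p_1, p_2, q > 0, and set Σ = LΓLᵀ + C and β = L_1ᵀΣ⁻¹L_1. Then the Bayesian minimum norm estimate x̂ = ΓLᵀΣ⁻¹L_1 for data y = L_1 satisfies x̂_1 = p_1·β, x̂_2 = a·p_2·β, and x̂_3 = b·(q⁻¹ + wᵀC⁻¹w)⁻¹·β. -/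
open Matrix

set_option maxHeartbeats 1000000 in
/-- Let `C` be a symmetric positive definite `m × m` real matrix,
`L₁ ∈ ℝᵐ` nonzero, `a, b ∈ ℝ`, and `w ∈ ℝᵐ` with `L₁ᵀ C⁻¹ w = 0`. Let `L` be the `m × 3`
matrix with columns `L₁`, `a • L₁`, and `L₃ = b • L₁ + w`, let `Γ = diag(p₁, p₂, q)` with
`p₁, p₂, q > 0`, and set `S = L Γ Lᵀ + C` and `β = L₁ᵀ S⁻¹ L₁`. Then the Bayesian minimum
norm estimate `x̂ = Γ Lᵀ S⁻¹ L₁` for data `y = L₁` satisfies `x̂₁ = p₁ β`,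
`x̂₂ = a p₂ β`, and `x̂₃ = b (q⁻¹ + wᵀ C⁻¹ w)⁻¹ β`. -/
theorem bmne_three_column_solution {m : ℕ}
    (C : Matrix (Fin m) (Fin m) ℝ) (hC : C.PosDef)
    (L₁ : Fin m → ℝ) (hL₁ : L₁ ≠ 0) (a b : ℝ) (w : Fin m → ℝ)
    (hw : L₁ ⬝ᵥ (C⁻¹ *ᵥ w) = 0)
    (p₁ p₂ q : ℝ) (hp₁ : 0 < p₁) (hp₂ : 0 < p₂) (hq : 0 < q)
    (L : Matrix (Fin m) (Fin 3) ℝ)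
    (hL : L = Matrix.of fun i j => ![L₁ i, a * L₁ i, b * L₁ i + w i] j)
    (Γ : Matrix (Fin 3) (Fin 3) ℝ) (hΓ : Γ = Matrix.diagonal ![p₁, p₂, q])
    (S : Matrix (Fin m) (Fin m) ℝ) (hS : S = L * Γ * Lᵀ + C)
    (β : ℝ) (hβ : β = L₁ ⬝ᵥ (S⁻¹ *ᵥ L₁))
    (xhat : Fin 3 → ℝ) (hxhat : xhat = (Γ * Lᵀ * S⁻¹) *ᵥ L₁) :
    xhat 0 = p₁ * β ∧ xhat 1 = a * p₂ * β ∧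
      xhat 2 = b * (q⁻¹ + w ⬝ᵥ (C⁻¹ *ᵥ w))⁻¹ * β := by
  have hCi : C⁻¹.PosDef := hC.inv
  -- symmetry of C⁻¹
  have hCisymm : C⁻¹ᵀ = C⁻¹ := by
    have := hCi.isHermitian
    rwa [Matrix.IsHermitian, conjTranspose_eq_transpose_of_trivial] at this
  have hw' : w ⬝ᵥ (C⁻¹ *ᵥ L₁) = 0 := by
    rw [Matrix.dotProduct_mulVec, ← Matrix.mulVec_transpose, hCisymm, dotProduct_comm]
    exact hw
  set s : ℝ := L₁ ⬝ᵥ (C⁻¹ *ᵥ L₁) with hs_def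
  set r : ℝ := w ⬝ᵥ (C⁻¹ *ᵥ w) with hr_def
  have hs : 0 < s := by
    have := hCi.dotProduct_mulVec_pos hL₁
    simpa using this
  have hr : 0 ≤ r := by
    have := hCi.posSemidef.dotProduct_mulVec_nonneg w
    simpa using this
  set c : ℝ := p₁ + a ^ 2 * p₂ with hc_def
  have hc : 0 < c := by positivity
  set D : ℝ := (1 + q * r) * (1 + c * s) + q * b ^ 2 * s with hD_def
  have hqr : 0 < 1 + q * r := by positivity
  have hD : 0 < D := by positivity
  set α : ℝ := (1 + q * r) / D with hα_def
  set γ : ℝ := -(q * b * s) / D with hγ_def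
  set v : Fin m → ℝ := α • (C⁻¹ *ᵥ L₁) + γ • (C⁻¹ *ᵥ w) with hv_def
  have h0 : L₁ ⬝ᵥ v = α * s := by
    simp [hv_def, dotProduct_add, dotProduct_smul, hw, smul_eq_mul, ← hs_def]
  have h1 : w ⬝ᵥ v = γ * r := by
    simp [hv_def, dotProduct_add, dotProduct_smul, hw', smul_eq_mul, ← hr_def]
  -- S is positive definite, hence invertible
  have hΓpsd : Γ.PosSemidef := by
    rw [hΓ]
    refine Matrix.posSemidef_diagonal_iff.mpr ?_
    intro i; fin_cases i <;> simp [le_of_lt, hp₁.le, hp₂.le, hq.le]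
  have hSpd : S.PosDef := by
    rw [hS]
    have : (L * Γ * Lᴴ).PosSemidef := hΓpsd.mul_mul_conjTranspose_same L
    rw [conjTranspose_eq_transpose_of_trivial] at this
    exact Matrix.PosDef.posSemidef_add this hC
  letI := hSpd.isUnit.invertible
  letI := hC.isUnit.invertible
  have hCv : C *ᵥ v = α • L₁ + γ • w := by
    rw [hv_def, Matrix.mulVec_add, Matrix.mulVec_smul, Matrix.mulVec_smul,
      Matrix.mulVec_mulVec, Matrix.mulVec_mulVec, Matrix.mul_inv_of_invertible,
      Matrix.one_mulVec]
    simp [Matrix.one_mulVec]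
  have hLt : Lᵀ *ᵥ v = ![α * s, a * (α * s), b * (α * s) + γ * r] := by
    funext j
    have e0 : ∑ i, L₁ i * v i = α * s := h0
    have e1 : ∑ i, w i * v i = γ * r := h1
    fin_cases j <;>
      simp [hL, Matrix.mulVec, dotProduct, Fin.sum_univ_three, add_mul, mul_assoc,
        ← Finset.mul_sum, e0, e1, Finset.sum_add_distrib]
  have hΓLt : Γ *ᵥ (Lᵀ *ᵥ v) =
      ![p₁ * (α * s), p₂ * (a * (α * s)), q * (b * (α * s) + γ * r)] := by
    rw [hLt, hΓ]
    funext j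
    fin_cases j <;> simp [Matrix.mulVec_diagonal]
  have hSv : S *ᵥ v = L₁ := by
    rw [hS, Matrix.add_mulVec, hCv, ← Matrix.mulVec_mulVec, ← Matrix.mulVec_mulVec, hΓLt]
    funext i
    simp only [hL, Matrix.mulVec, dotProduct, Fin.sum_univ_three, Matrix.of_apply,
      Matrix.cons_val_zero, Matrix.cons_val_one, Matrix.head_cons, Pi.add_apply,
      Pi.smul_apply, smul_eq_mul, Matrix.cons_val_two, Matrix.tail_cons]
    rw [hα_def, hγ_def, hD_def, hc_def]
    field_simp
    ring
  have hSiL : S⁻¹ *ᵥ L₁ = v := Matrix.inv_mulVec_eq_vec hSv.symm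
  have hβ' : β = α * s := by rw [hβ, hSiL, h0]
  have hx : xhat = ![p₁ * (α * s), p₂ * (a * (α * s)), q * (b * (α * s) + γ * r)] := by
    rw [hxhat, Matrix.mul_assoc, ← Matrix.mulVec_mulVec, ← Matrix.mulVec_mulVec, hSiL, hΓLt]
  rw [hx, hβ']
  refine ⟨by simp, by simp; ring, ?_⟩
  simp only [Matrix.cons_val_two, Matrix.tail_cons, Matrix.head_cons, Matrix.cons_val_one]
  rw [hα_def, hγ_def]
  have h2 : q⁻¹ + r ≠ 0 := by positivity
  field_simp
  ring
end

section
/- Let C be a symmetric positive definite m×m real matrix, L_1 ∈ ℝᵐ nonzero, a, b ∈ ℝ, and w ∈ ℝᵐ with L_1ᵀC⁻¹w = 0. Let L be the m×3 matrix with columns L_1, a·L_1, and L_3 = b·L_1 + w, let Γ = diag(p_1, p_2, q) with p_1, p_2, q > 0, set Σ = LΓLᵀ + C, and let x̂ = ΓLᵀΣ⁻¹L_1. Then |x̂_1| > |x̂_2| and |x̂_1| > |x̂_3| if and only if p_1 > |a|·p_2 and p_1 > |b|·(q⁻¹ + wᵀC⁻¹w)⁻¹. -/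
open Matrix

set_option maxHeartbeats 1000000 in
/-- Let `C` be a symmetric positive definite `m × m` real matrix,
`L₁ ∈ ℝᵐ` nonzero, `a, b ∈ ℝ`, and `w ∈ ℝᵐ` with `L₁ᵀ C⁻¹ w = 0`. Let `L` be the `m × 3`
matrix with columns `L₁`, `a • L₁`, and `L₃ = b • L₁ + w`, let `Γ = diag(p₁, p₂, q)` with
`p₁, p₂, q > 0`, set `S = L Γ Lᵀ + C`, and let `x̂ = Γ Lᵀ S⁻¹ L₁`. Then `|x̂₁| > |x̂₂|`
and `|x̂₁| > |x̂₃|` if and only if `p₁ > |a| p₂` and `p₁ > |b| (q⁻¹ + wᵀ C⁻¹ w)⁻¹`. -/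
theorem bmne_correct_localization_iff {m : ℕ}
    (C : Matrix (Fin m) (Fin m) ℝ) (hC : C.PosDef)
    (L₁ : Fin m → ℝ) (hL₁ : L₁ ≠ 0) (a b : ℝ) (w : Fin m → ℝ)
    (hw : L₁ ⬝ᵥ (C⁻¹ *ᵥ w) = 0)
    (p₁ p₂ q : ℝ) (hp₁ : 0 < p₁) (hp₂ : 0 < p₂) (hq : 0 < q)
    (L : Matrix (Fin m) (Fin 3) ℝ)
    (hL : L = Matrix.of fun i j => ![L₁ i, a * L₁ i, b * L₁ i + w i] j)
    (Γ : Matrix (Fin 3) (Fin 3) ℝ) (hΓ : Γ = Matrix.diagonal ![p₁, p₂, q])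
    (S : Matrix (Fin m) (Fin m) ℝ) (hS : S = L * Γ * Lᵀ + C)
    (xhat : Fin 3 → ℝ) (hxhat : xhat = (Γ * Lᵀ * S⁻¹) *ᵥ L₁) :
    (|xhat 0| > |xhat 1| ∧ |xhat 0| > |xhat 2|) ↔
      (p₁ > |a| * p₂ ∧ p₁ > |b| * (q⁻¹ + w ⬝ᵥ (C⁻¹ *ᵥ w))⁻¹) := by
  have hCinv : (C⁻¹).PosDef := hC.inv
  set u : Fin m → ℝ := C⁻¹ *ᵥ L₁ with hu
  set v : Fin m → ℝ := C⁻¹ *ᵥ w with hv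
  set β : ℝ := L₁ ⬝ᵥ u with hβdef
  set γ : ℝ := w ⬝ᵥ v with hγdef
  have hβ : 0 < β := by
    have := hCinv.dotProduct_mulVec_pos hL₁
    simpa using this
  have hγ : 0 ≤ γ := by
    have := hCinv.posSemidef.dotProduct_mulVec_nonneg w
    simpa using this
  -- symmetry facts
  have hCiH : (C⁻¹).IsHermitian := hCinv.isHermitian
  have hCiT : (C⁻¹)ᵀ = C⁻¹ := by
    have := hCiH.eq
    rwa [Matrix.conjTranspose_eq_transpose_of_trivial] at this
  have hwu : w ⬝ᵥ u = 0 := by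
    rw [hu, Matrix.dotProduct_mulVec, ← Matrix.mulVec_transpose, hCiT,
      dotProduct_comm]
    exact hw
  -- the denominator
  set D : ℝ := (1 + (p₁ + a ^ 2 * p₂ + q * b ^ 2) * β) * (1 + q * γ) - q ^ 2 * b ^ 2 * β * γ
    with hDdef
  have h1qγ : 0 < 1 + q * γ := by nlinarith [mul_nonneg hq.le hγ]
  have hDeq : D = 1 + q * γ + (p₁ + a ^ 2 * p₂ + q * b ^ 2) * β
      + (p₁ + a ^ 2 * p₂) * (q * β * γ) := by rw [hDdef]; ring
  have hD : 0 < D := by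
    rw [hDeq]
    have t1 : 0 ≤ q * γ := mul_nonneg hq.le hγ
    have t2 : 0 < (p₁ + a ^ 2 * p₂ + q * b ^ 2) * β :=
      mul_pos (by positivity) hβ
    have t3 : 0 ≤ (p₁ + a ^ 2 * p₂) * (q * β * γ) :=
      mul_nonneg (by positivity) (mul_nonneg (mul_nonneg hq.le hβ.le) hγ)
    linarith
  set s : ℝ := (1 + q * γ) / D with hs
  set t : ℝ := -(q * b * β) / D with ht
  set x : Fin m → ℝ := s • u + t • v with hx
  -- key dot products
  have hLx : L₁ ⬝ᵥ x = s * β := by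
    rw [hx, dotProduct_add, dotProduct_smul, dotProduct_smul, ← hβdef]
    rw [show L₁ ⬝ᵥ v = 0 from hw]
    simp [smul_eq_mul]
  have hwx : w ⬝ᵥ x = t * γ := by
    rw [hx, dotProduct_add, dotProduct_smul, dotProduct_smul, hwu, ← hγdef]
    simp [smul_eq_mul]
  -- transpose action
  have hcol : ∀ j, (Lᵀ *ᵥ x) j = ∑ i, L i j * x i := by
    intro j
    simp [Matrix.mulVec, dotProduct, Matrix.transpose_apply]
  have hcol0 : (Lᵀ *ᵥ x) 0 = s * β := by
    rw [hcol]
    simp only [hL, Matrix.of_apply, Matrix.cons_val_zero]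
    exact hLx
  have hcol1 : (Lᵀ *ᵥ x) 1 = a * (s * β) := by
    rw [hcol]
    simp only [hL, Matrix.of_apply, Matrix.cons_val_one, Matrix.head_cons]
    rw [← hLx]
    simp [dotProduct, Finset.mul_sum, mul_assoc]
  have hcol2 : (Lᵀ *ᵥ x) 2 = b * (s * β) + t * γ := by
    rw [hcol]
    simp only [hL, Matrix.of_apply]
    rw [← hLx, ← hwx]
    simp only [dotProduct, Finset.mul_sum]
    rw [← Finset.sum_add_distrib]
    congr 1
    funext i
    simp [Matrix.cons_val_two, Matrix.tail_cons]
    ring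
  have hLTx : Lᵀ *ᵥ x = ![s * β, a * (s * β), b * (s * β) + t * γ] := by
    funext j
    fin_cases j
    · simpa using hcol0
    · simpa using hcol1
    · simpa using hcol2
  have hGLTx : Γ *ᵥ (Lᵀ *ᵥ x) = ![p₁ * (s * β), p₂ * (a * (s * β)), q * (b * (s * β) + t * γ)] := by
    rw [hLTx, hΓ]
    funext j
    fin_cases j <;> simp [Matrix.mulVec_diagonal]
  -- C action
  have hCdet : IsUnit C.det := hC.det_pos.ne'.isUnit
  have hCx : C *ᵥ x = s • L₁ + t • w := by
    rw [hx, Matrix.mulVec_add, Matrix.mulVec_smul, Matrix.mulVec_smul, hu, hv,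
      Matrix.mulVec_mulVec, Matrix.mulVec_mulVec, Matrix.mul_nonsing_inv C hCdet,
      Matrix.one_mulVec, Matrix.one_mulVec]
  -- L action on a Fin-3 vector
  have hLmul : ∀ c : Fin 3 → ℝ,
      L *ᵥ c = (c 0 + a * c 1 + b * c 2) • L₁ + (c 2) • w := by
    intro c
    funext i
    simp [Matrix.mulVec, dotProduct, Fin.sum_univ_three, hL]
    ring
  -- S x = L₁
  have hSx : S *ᵥ x = L₁ := by
    rw [hS, Matrix.add_mulVec, ← Matrix.mulVec_mulVec, ← Matrix.mulVec_mulVec,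
      hGLTx, hCx, hLmul]
    funext i
    simp only [Matrix.cons_val_zero, Matrix.cons_val_one, Matrix.head_cons,
      Matrix.cons_val_two, Matrix.tail_cons, Pi.add_apply, Pi.smul_apply, smul_eq_mul]
    have hc1 : (p₁ * (s * β) + a * (p₂ * (a * (s * β))) + b * (q * (b * (s * β) + t * γ))) + s
        = 1 := by
      rw [hs, ht]
      field_simp
      rw [hDdef]
      ring
    have hc2 : q * (b * (s * β) + t * γ) + t = 0 := by
      rw [hs, ht]
      field_simp
      ring
    linear_combination (L₁ i) * hc1 + (w i) * hc2
  -- invert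
  have hSpd : S.PosDef := by
    rw [hS]
    refine Matrix.PosDef.posSemidef_add ?_ hC
    have hΓpsd : Γ.PosSemidef := by
      rw [hΓ]
      refine Matrix.posSemidef_diagonal_iff.mpr ?_
      intro i
      fin_cases i <;> simp [hp₁.le, hp₂.le, hq.le]
    have hLH : Lᴴ = Lᵀ := by
      ext i j
      simp [Matrix.conjTranspose_apply]
    have := hΓpsd.mul_mul_conjTranspose_same L
    rwa [hLH] at this
  have hSdet : IsUnit S.det := hSpd.det_pos.ne'.isUnit
  have hix : S⁻¹ *ᵥ L₁ = x := by
    rw [← hSx, Matrix.mulVec_mulVec, Matrix.nonsing_inv_mul S hSdet, Matrix.one_mulVec]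
  -- compute xhat
  have hxhat' : xhat = ![p₁ * (s * β), p₂ * (a * (s * β)), q * (b * (s * β) + t * γ)] := by
    rw [hxhat, Matrix.mul_assoc, ← Matrix.mulVec_mulVec, ← Matrix.mulVec_mulVec, hix, hGLTx]
  have e0 : xhat 0 = p₁ * (s * β) := by rw [hxhat']; rfl
  have e1 : xhat 1 = p₂ * (a * (s * β)) := by rw [hxhat']; rfl
  have e2 : xhat 2 = b * (q * β / D) := by
    rw [hxhat']
    show q * (b * (s * β) + t * γ) = _
    rw [hs, ht]
    field_simp
    ring
  have hsβ : 0 < s * β := by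
    rw [hs]
    positivity
  have habs0 : |xhat 0| = p₁ * (s * β) := by
    rw [e0, abs_of_pos (mul_pos hp₁ hsβ)]
  have habs1 : |xhat 1| = |a| * (p₂ * (s * β)) := by
    rw [e1, abs_mul, abs_mul, abs_of_pos hp₂, abs_of_pos hsβ]; ring
  have hqβD : 0 < q * β / D := by positivity
  have habs2 : |xhat 2| = |b| * (q * β / D) := by
    rw [e2, abs_mul, abs_of_pos hqβD]
  have hinv : (q⁻¹ + γ)⁻¹ = q / (1 + q * γ) := by
    rw [show q⁻¹ + γ = (1 + q * γ) / q from by field_simp, inv_div]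
  rw [habs0, habs1, habs2, hinv]
  constructor
  · rintro ⟨h1, h2⟩
    constructor
    · have := (mul_lt_mul_iff_left₀ hsβ).mp (by linarith [h1] : |a| * p₂ * (s * β) < p₁ * (s * β))
      linarith
    · rw [gt_iff_lt, ← mul_div_assoc, div_lt_iff₀ h1qγ]
      have h2' : |b| * (q * β / D) < p₁ * (s * β) := h2
      rw [hs] at h2'
      have hβD : (0:ℝ) < β / D := by positivity
      have : |b| * q * (β / D) < p₁ * (1 + q * γ) * (β / D) := by
        calc |b| * q * (β / D) = |b| * (q * β / D) := by ring
        _ < p₁ * ((1 + q * γ) / D * β) := h2'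
        _ = p₁ * (1 + q * γ) * (β / D) := by ring
      have := (mul_lt_mul_iff_left₀ hβD).mp this
      linarith
  · rintro ⟨h1, h2⟩
    constructor
    · have : |a| * p₂ * (s * β) < p₁ * (s * β) := (mul_lt_mul_iff_left₀ hsβ).mpr h1
      calc |a| * (p₂ * (s * β)) = |a| * p₂ * (s * β) := by ring
        _ < p₁ * (s * β) := this
    · rw [gt_iff_lt, ← mul_div_assoc, div_lt_iff₀ h1qγ] at h2
      have hβD : (0:ℝ) < β / D := by positivity
      have h3 : |b| * q * (β / D) < p₁ * (1 + q * γ) * (β / D) :=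
        (mul_lt_mul_iff_left₀ hβD).mpr h2
      show |b| * (q * β / D) < p₁ * (s * β)
      rw [hs]
      calc |b| * (q * β / D) = |b| * q * (β / D) := by ring
        _ < p₁ * (1 + q * γ) * (β / D) := h3
        _ = p₁ * ((1 + q * γ) / D * β) := by ring
end
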